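/- If the minimum-weight solution ε̂ of the syndrome equation H^{(i)} ε̂^T = β^{(i)} satisfies wt(ε̂) ≤ δ and the true error ε_i satisfies wt(ε_i) ≤ δ, and L corresponds to a δ-error-correcting index code, then ε̂ - ε_i ∈ span{L_j : j ∈ Y_i}, i.e., ε̂ ∈ L_i(ε_i). -/

import Mathlib

open Matrix

/-!
Both `εh` and the true error `ε` solve the syndrome equation, so `εh - ε` lies in the code
`span ({L (f i)} ∪ {L j : j ∈ Y_i})`; write it as `c • L (f i) + w` with `w ∈ span {L j : j ∈ Y_i}`.
If `c ≠ 0`, the coefficient vector of `εh - ε` vanishes on `X i` and not at `f i`, so the ECIC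
property forces `wt (εh - ε) ≥ 2δ + 1`, contradicting `wt (εh - ε) ≤ wt εh + wt ε ≤ 2δ`.
-/

theorem hammingNorm_sub_le {ι : Type*} [Fintype ι] {β : ι → Type*} [∀ i, AddCommGroup (β i)]
    [∀ i, DecidableEq (β i)] (a b : ∀ i, β i) :
    hammingNorm (a - b) ≤ hammingNorm a + hammingNorm b :=
  calc hammingNorm (a - b) = hammingDist b a := by rw [hammingDist_eq_hammingNorm, neg_add_eq_sub]
    _ ≤ hammingDist 0 b + hammingDist 0 a := hammingDist_triangle_left b a 0
    _ = hammingNorm a + hammingNorm b := by rw [hammingDist_zero_left, add_comm]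

namespace Matrix

variable {ι κ ρ R : Type*} [Fintype ι]

theorem sub_mem_of_mulVec_eq [Fintype κ] [Ring R] {H : Matrix ρ κ R}
    {C : Submodule R (κ → R)} (hC : ∀ v, v ∈ C ↔ H *ᵥ v = 0) {a b : κ → R}
    (h : H *ᵥ a = H *ᵥ b) : a - b ∈ C :=
  (hC _).2 <| by rw [mulVec_sub, h, sub_self]

theorem vecMul_sub_sum_mem_span [Ring R] (L : Matrix ι κ R) (x : ι → R) (s : Finset ι) :
    x ᵥ* L - ∑ j ∈ s, x j • L j ∈ Submodule.span R (L '' (↑s)ᶜ) := by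
  classical
  rw [vecMul_eq_sum, ← Finset.sum_sdiff (Finset.subset_univ s), add_sub_cancel_right]
  refine Submodule.sum_mem _ fun j hj => Submodule.smul_mem _ _ (Submodule.subset_span ?_)
  exact Set.mem_image_of_mem L (by simpa using hj)

variable [Semiring R] (L : Matrix ι κ R)

theorem exists_vecMul_eq_of_mem_span_image {S : Set ι} {v : κ → R}
    (hv : v ∈ Submodule.span R (L '' S)) : ∃ z : ι → R, (∀ j ∉ S, z j = 0) ∧ z ᵥ* L = v := by
  obtain ⟨l, hlS, rfl⟩ := (Finsupp.mem_span_image_iff_linearCombination R).mp hv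
  refine ⟨l, (Finsupp.mem_supported' R l).mp hlS, ?_⟩
  rw [vecMul_eq_sum, Finsupp.linearCombination_apply R (v := (L : ι → κ → R)), Finsupp.sum_fintype]
  exact fun _ => zero_smul R _

theorem mem_span_image_of_mem_span_union {k : ι} {S : Set ι} {v : κ → R}
    (hv : v ∈ Submodule.span R ({L k} ∪ L '' S))
    (hk : ∀ z : ι → R, (∀ j, j ≠ k → j ∉ S → z j = 0) → z k ≠ 0 → z ᵥ* L ≠ v) :
    v ∈ Submodule.span R (L '' S) := by
  classical
  by_cases hkS : k ∈ S
  · refine Submodule.span_mono (Set.union_subset ?_ subset_rfl) hv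
    exact Set.singleton_subset_iff.mpr (Set.mem_image_of_mem L hkS)
  rw [Set.singleton_union, Submodule.mem_span_insert] at hv
  obtain ⟨c, w, hw, rfl⟩ := hv
  obtain ⟨l, hlS, rfl⟩ := exists_vecMul_eq_of_mem_span_image L hw
  by_cases hc : c = 0
  · simpa [hc] using hw
  refine absurd ?_ (hk (Pi.single k c + l) (fun j hjk hjS => ?_) (by simp [hlS k hkS, hc]))
  · rw [add_vecMul, single_vecMul]
    rfl
  · simp [hjk, hlS j hjS]

end Matrix

theorem syndrome_solution_in_coset_general {m n N r : ℕ} {F : Type} [Field F]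
    [DecidableEq F]
    (X : Fin m → Finset (Fin n)) (f : Fin m → Fin n) (hf : ∀ i, f i ∉ X i)
    (δ : ℕ) (L : Matrix (Fin n) (Fin N) F)
    (hL : ∀ z : Fin n → F, (∃ i : Fin m, (∀ j ∈ X i, z j = 0) ∧ z (f i) ≠ 0) →
      2 * δ + 1 ≤ hammingNorm (vecMul z L))
    (i : Fin m) (H : Matrix (Fin r) (Fin N) F)
    (hH : ∀ v : Fin N → F,
      v ∈ Submodule.span F ({L (f i)} ∪ L '' {j : Fin n | j ≠ f i ∧ j ∉ X i}) ↔
        H.mulVec v = 0)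
    (x : Fin n → F) (ε y : Fin N → F)
    (hy : y = vecMul x L + ε) (hε : hammingNorm ε ≤ δ)
    (εh : Fin N → F) (hεh : hammingNorm εh ≤ δ)
    (hsynd : H.mulVec εh = H.mulVec (y - ∑ j ∈ X i, x j • L j)) :
    εh - ε ∈ Submodule.span F (L '' {j : Fin n | j ≠ f i ∧ j ∉ X i}) := by
  set C := Submodule.span F ({L (f i)} ∪ L '' {j : Fin n | j ≠ f i ∧ j ∉ X i})
  have hcodeword : y - ∑ j ∈ X i, x j • L j - ε ∈ C := by
    rw [hy, add_sub_right_comm, add_sub_cancel_right]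
    refine Submodule.span_mono ?_ (L.vecMul_sub_sum_mem_span x (X i))
    rintro _ ⟨j, hj, rfl⟩
    by_cases hji : j = f i
    · exact Or.inl (congrArg L hji)
    · exact Or.inr ⟨j, ⟨hji, hj⟩, rfl⟩
  have hdiff : εh - ε ∈ C := by
    simpa using C.add_mem (sub_mem_of_mulVec_eq hH hsynd) hcodeword
  refine L.mem_span_image_of_mem_span_union hdiff fun z hzY hzf hzv => ?_
  have hzX : ∀ j ∈ X i, z j = 0 := fun j hj =>
    hzY j (fun h => hf i (h ▸ hj)) fun hjY => hjY.2 hj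
  have hlarge := hL z ⟨i, hzX, hzf⟩
  rw [hzv] at hlarge
  have hsmall := hammingNorm_sub_le εh ε
  omega

/-- if the minimum-weight solution εh of the syndrome equation
H⁽ⁱ⁾εhᵀ = β⁽ⁱ⁾ (with β⁽ⁱ⁾ = H⁽ⁱ⁾(y_i - x_{X_i}L_{X_i})ᵀ) has wt(εh) ≤ δ, the true
error ε_i has wt(ε_i) ≤ δ, and L is a (δ,H)-ECIC, then
εh - ε_i ∈ span{L_j : j ∈ Y_i}, i.e. εh ∈ L_i(ε_i). -/
theorem syndrome_solution_in_coset {m n N r : ℕ} {F : Type} [Field F] [Fintype F]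
    [DecidableEq F]
    (X : Fin m → Finset (Fin n)) (f : Fin m → Fin n) (hf : ∀ i, f i ∉ X i)
    (δ : ℕ) (L : Matrix (Fin n) (Fin N) F)
    (hL : ∀ z : Fin n → F, (∃ i : Fin m, (∀ j ∈ X i, z j = 0) ∧ z (f i) ≠ 0) →
      2 * δ + 1 ≤ hammingNorm (vecMul z L))
    (i : Fin m) (H : Matrix (Fin r) (Fin N) F)
    (hH : ∀ v : Fin N → F,
      v ∈ Submodule.span F ({L (f i)} ∪ L '' {j : Fin n | j ≠ f i ∧ j ∉ X i}) ↔
        H.mulVec v = 0)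
    (x : Fin n → F) (ε y : Fin N → F)
    (hy : y = vecMul x L + ε) (hε : hammingNorm ε ≤ δ)
    (εh : Fin N → F) (hεh : hammingNorm εh ≤ δ)
    (hsynd : H.mulVec εh = H.mulVec (y - ∑ j ∈ X i, x j • L j)) :
    εh - ε ∈ Submodule.span F (L '' {j : Fin n | j ≠ f i ∧ j ∉ X i}) :=
  syndrome_solution_in_coset_general X f hf δ L hL i H hH x ε y hy hε εh hεh hsynd
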